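/- Let T be a thick tree with loops with sink s. The map φ : ℤ^{V₀} → ∏_{j ∈ V₀} ℤ/e_{j,p(j)}ℤ given by φ(u)_j = ∑_{i ⪰ j} u_i (mod e_{j,p(j)}) is a surjective group homomorphism with kernel Λ, hence descends to an isomorphism ℤ^{V₀}/Λ ≅ ∏_{j ∈ V₀} ℤ/e_{j,p(j)}ℤ; moreover for every c ∈ ℕ^{V₀} one has φ(c) = φ(σ(c + e^T)), where e^T is the identity of the sandpile group G. -/

import Mathlib

/-!
Write `E j = e j (p j)` and `ψ u j = ∑_{i ⪰ j} u i`, so that `φ` is `ψ` reduced modulo `E`.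
In a tree `i ⪰ j` holds iff `i = j` or `p i ⪰ j`. Hence `ψ` is invertible over `ℤ`, with inverse
`t ↦ (j ↦ t j - ∑_{p i = j} t i)`, and the only edge leaving the descendants of `j` is
`{j, p j}`, which gives `ψ Δ_i = E_i δ_i - ∑_{p j = i} E_j δ_j`. So `φ` kills `Λ`; conversely, if
`ψ u = ∑_j E_j m_j δ_j` then `u = ∑_i c_i Δ_i` with `c_i = ∑_{i ⪰ k} m_k`, because
`c_j - c_{p j} = m_j`. A toppling subtracts a row of `Δ` from the configuration, so `φ` is
constant along stabilization; applied to `e^T ⊕ e^T = e^T` this gives `φ(e^T) = 0`.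
-/

namespace SandpilePaper

variable {V : Type*} [Fintype V] [DecidableEq V]

/-- Configurations: assignments of numbers of grains to ordinary (non-sink) vertices. -/
abbrev Conf (s : V) : Type _ := {i : V // i ≠ s} → ℕ

/-- The degree of a vertex: `deg i = ∑ j, e i j`. -/
def deg (e : V → V → ℕ) (i : V) : ℕ := ∑ j, e i j

/-- Toppling the (unstable) vertex `i`. -/
def toppleAt (e : V → V → ℕ) (s : V) (i : {i : V // i ≠ s}) (u : Conf s) : Conf s :=
  fun j => if j = i then u i - deg e i.1 + e i.1 i.1 else u j + e i.1 j.1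

/-- One toppling step: some unstable vertex topples. -/
def Topple (e : V → V → ℕ) (s : V) (u v : Conf s) : Prop :=
  ∃ i : {i : V // i ≠ s}, deg e i.1 ≤ u i ∧ v = toppleAt e s i u

/-- A configuration is stable if every ordinary vertex has fewer grains than its degree. -/
def Stable (e : V → V → ℕ) (s : V) (u : Conf s) : Prop :=
  ∀ j : {i : V // i ≠ s}, u j < deg e j.1

/-- The underlying simple graph: edges between distinct vertices with positive multiplicity. -/
def graph (e : V → V → ℕ) : SimpleGraph V := SimpleGraph.fromRel fun i j => 0 < e i j

/-- `σ` is a stabilization map: `σ u` is stable and reached from `u` by finitely many topplings. -/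
def IsStabilization (e : V → V → ℕ) (s : V) (σ : Conf s → Conf s) : Prop :=
  ∀ u, Stable e s (σ u) ∧ Relation.ReflTransGen (Topple e s) u (σ u)

/-- A stable configuration `u` is recurrent if every configuration can reach it. -/
def Recurrent (e : V → V → ℕ) (s : V) (σ : Conf s → Conf s) (u : Conf s) : Prop :=
  Stable e s u ∧ ∀ v : Conf s, ∃ w : Conf s, σ (v + w) = u

/-- Apply a sequence of topplings. -/
def applySeq (e : V → V → ℕ) (s : V) (u : Conf s) : List {i : V // i ≠ s} → Conf s
  | [] => u
  | i :: L => applySeq e s (toppleAt e s i u) L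

/-- A toppling sequence is valid if each toppled vertex is unstable when toppled. -/
def ValidSeq (e : V → V → ℕ) (s : V) (u : Conf s) : List {i : V // i ≠ s} → Prop
  | [] => True
  | i :: L => deg e i.1 ≤ u i ∧ ValidSeq e s (toppleAt e s i u) L

/-- `succeq e s i j` means `i ⪰ j`: `j` lies on the unique path from `i` to the sink `s`. -/
def succeq (e : V → V → ℕ) (s i j : V) : Prop :=
  (graph e).dist i s = (graph e).dist i j + (graph e).dist j s

noncomputable instance (e : V → V → ℕ) (s i j : V) : Decidable (succeq e s i j) := Nat.decEq _ _

/-- `p` assigns to each ordinary vertex its parent: its neighbor on the path to the sink. -/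
def IsParent (e : V → V → ℕ) (s : V) (p : {i : V // i ≠ s} → V) : Prop :=
  ∀ j : {i : V // i ≠ s}, (graph e).Adj j.1 (p j) ∧
    (graph e).dist (p j) s + 1 = (graph e).dist j.1 s

/-- The set `{i : i ⪰ j}`. -/
noncomputable def descendants (e : V → V → ℕ) (s : V) (j : {i : V // i ≠ s}) :
    Finset {i : V // i ≠ s} :=
  Finset.univ.filter fun i => succeq e s i.1 j.1

/-- The set `{i : i ≻ j}`. -/
noncomputable def strictDescendants (e : V → V → ℕ) (s : V) (j : {i : V // i ≠ s}) :
    Finset {i : V // i ≠ s} :=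
  Finset.univ.filter fun i => i ≠ j ∧ succeq e s i.1 j.1

/-- `j` is a leaf: its parent is its only neighbor in the underlying tree. -/
def IsLeaf (e : V → V → ℕ) (s : V) (p : {i : V // i ≠ s} → V) (j : {i : V // i ≠ s}) : Prop :=
  ∀ k : V, (graph e).Adj j.1 k → k = p j

/-- Rows of the toppling matrix `Δ`. -/
def deltaRow (e : V → V → ℕ) (s : V) (i j : {i : V // i ≠ s}) : ℤ :=
  if i = j then (deg e i.1 : ℤ) - (e i.1 i.1 : ℤ) else -(e i.1 j.1 : ℤ)

/-- The lattice `Λ` spanned by the rows of the toppling matrix. -/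
def lattice (e : V → V → ℕ) (s : V) : AddSubgroup ({i : V // i ≠ s} → ℤ) :=
  AddSubgroup.closure (Set.range (deltaRow e s))

/-- The map `φ(u)_j = ∑_{i ⪰ j} u_i (mod e_{j,p(j)})`. -/
noncomputable def phi (e : V → V → ℕ) (s : V) (p : {i : V // i ≠ s} → V) (u : Conf s)
    (j : {i : V // i ≠ s}) : ZMod (e j.1 (p j)) :=
  ∑ i ∈ descendants e s j, (u i : ZMod (e j.1 (p j)))

/-- The map `φ` on integer vectors. -/
noncomputable def phiZ (e : V → V → ℕ) (s : V) (p : {i : V // i ≠ s} → V) (u : {i : V // i ≠ s} → ℤ)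
    (j : {i : V // i ≠ s}) : ZMod (e j.1 (p j)) :=
  ∑ i ∈ descendants e s j, (u i : ZMod (e j.1 (p j)))


section Tree

open SimpleGraph

variable {W : Type*}

theorem _root_.SimpleGraph.IsTree.eq_of_adj_of_dist_add_one {G : SimpleGraph W} (hG : G.IsTree)
    {s a b c : W} (hb : G.Adj a b) (hc : G.Adj a c) (hbs : G.dist b s + 1 = G.dist a s)
    (hcs : G.dist c s + 1 = G.dist a s) : b = c := by
  obtain ⟨P, -, hP⟩ := hG.connected.exists_path_of_dist b s
  obtain ⟨Q, -, hQ⟩ := hG.connected.exists_path_of_dist c s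
  have hbP := (Walk.cons hb P).isPath_of_length_eq_dist (by simp [hP, hbs])
  have hcQ := (Walk.cons hc Q).isPath_of_length_eq_dist (by simp [hQ, hcs])
  simpa using congrArg Walk.snd ((hG.existsUnique_path a s).unique hbP hcQ)

/-- The first step of a geodesic from `a` to `j` leads closer to `s`, so it is the step to `b`. -/
theorem _root_.SimpleGraph.IsTree.dist_eq_dist_add_dist_of_adj {G : SimpleGraph W}
    (hG : G.IsTree) {s a b j : W} (hb : G.Adj a b) (hbs : G.dist b s + 1 = G.dist a s)
    (hja : a ≠ j) (haj : G.dist a s = G.dist a j + G.dist j s) :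
    G.dist b s = G.dist b j + G.dist j s := by
  have hconn := hG.connected
  obtain ⟨w, hw⟩ := hconn.exists_walk_length_eq_dist a j
  cases w with
  | nil => exact absurd rfl hja
  | cons hc q =>
    rename_i c
    rw [Walk.length_cons] at hw
    have hcj := dist_le q
    have hcs := hconn.dist_triangle (u := c) (v := j) (w := s)
    have hac := hconn.dist_triangle (u := a) (v := c) (w := s)
    rw [dist_eq_one_iff_adj.mpr hc] at hac
    obtain rfl : c = b := hG.eq_of_adj_of_dist_add_one hc hb (by omega) hbs
    omega

variable {e : W → W → ℕ} {s : W} {p : {i : W // i ≠ s} → W}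

theorem succeq_refl (j : W) : succeq e s j j := by
  simp [succeq]

theorem dist_lt_of_succeq (hconn : (graph e).Connected) {i j : W} (hij : succeq e s i j)
    (hne : i ≠ j) : (graph e).dist j s < (graph e).dist i s := by
  have := hconn.pos_dist_of_ne hne
  unfold succeq at hij
  omega

theorem not_sink_succeq (hconn : (graph e).Connected) {j : W} (hj : j ≠ s) : ¬ succeq e s s j :=
  fun h => by simpa using dist_lt_of_succeq hconn h hj.symm

theorem not_parent_succeq (hp : IsParent e s p) (j : {i : W // i ≠ s}) :
    ¬ succeq e s (p j) j := by
  have := (hp j).2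
  unfold succeq
  omega

theorem parent_parent_ne (hp : IsParent e s p) {i j : {i : W // i ≠ s}} (hij : p i = j) :
    p j ≠ i := by
  intro hji
  have hi := (hp i).2
  have hj := (hp j).2
  rw [hij] at hi
  rw [hji] at hj
  omega

theorem succeq_iff_eq_or_parent_succeq (ht : (graph e).IsTree) (hp : IsParent e s p)
    (i : {i : W // i ≠ s}) (j : W) : succeq e s i j ↔ i.1 = j ∨ succeq e s (p i) j := by
  have hconn := ht.connected
  constructor
  · intro hij
    by_cases hi : i.1 = j
    · exact Or.inl hi
    · exact Or.inr (ht.dist_eq_dist_add_dist_of_adj (hp i).1 (hp i).2 hi hij)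
  · rintro (rfl | hpj)
    · exact succeq_refl _
    · have hpi := (hp i).2
      have h1 := hconn.dist_triangle (u := i.1) (v := p i) (w := j)
      have h2 := hconn.dist_triangle (u := i.1) (v := j) (w := s)
      rw [dist_eq_one_iff_adj.mpr (hp i).1] at h1
      unfold succeq at hpj ⊢
      omega

theorem adj_eq_parent_or_parent_eq (ht : (graph e).IsTree) (hp : IsParent e s p)
    (i : {i : W // i ≠ s}) {k : W} (hik : (graph e).Adj i k) :
    k = p i ∨ ∃ k' : {i : W // i ≠ s}, k'.1 = k ∧ p k' = i := by
  rcases ht.dist_eq_dist_add_one_of_adj s hik with h | h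
  · rw [dist_comm (u := s), dist_comm (u := s)] at h
    exact Or.inl (ht.eq_of_adj_of_dist_add_one hik (hp i).1 h.symm (hp i).2)
  · rw [dist_comm (u := s), dist_comm (u := s)] at h
    have hk : k ≠ s := by
      rintro rfl
      simp at h
    exact Or.inr ⟨⟨k, hk⟩, rfl,
      ht.eq_of_adj_of_dist_add_one (hp ⟨k, hk⟩).1 hik.symm (hp _).2 h.symm⟩

/-- An edge `{i, k}` contributes to the flow out of the descendants of `j` only if it is the
edge from `j` to its parent. -/
theorem edge_mul_indicator_sub [DecidableEq W] (ht : (graph e).IsTree) (hp : IsParent e s p)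
    (i j : {i : W // i ≠ s}) (k : W) :
    (e i k : ℤ) * ((if succeq e s i j then 1 else 0) - (if succeq e s k j then 1 else 0)) =
      (if k = p i ∧ i = j then (e i k : ℤ) else 0) -
        (if k = j ∧ i.1 = p j then (e i k : ℤ) else 0) := by
  by_cases he : e i k = 0
  · simp [he]
  have hpi : p i ≠ i := (hp i).1.ne.symm
  have hpj : p j ≠ j := (hp j).1.ne.symm
  have hnj := not_parent_succeq hp j
  rcases eq_or_ne k i with rfl | hki
  · have : ¬ (i.1 = j ∧ i.1 = p j) := fun h => hpj (h.2.symm.trans h.1)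
    simp [hpi.symm, this]
  rcases adj_eq_parent_or_parent_eq ht hp i (k := k) ((fromRel_adj _ _ _).mpr
      ⟨hki.symm, Or.inl (Nat.pos_of_ne_zero he)⟩) with rfl | ⟨k, rfl, hpk⟩
  · by_cases hij : i = j
    · subst hij
      simp [succeq_refl, hnj, hpi]
    · have hi := succeq_iff_eq_or_parent_succeq ht hp i j
      have hne : ¬ (p i = j ∧ i.1 = p j) := fun h =>
        parent_parent_ne hp (i := i) (j := j) h.1 h.2.symm
      simp [hi, Subtype.val_injective.ne hij, hne, hij]
  · have hk := succeq_iff_eq_or_parent_succeq ht hp k j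
    rw [hpk] at hk
    by_cases hkj : k = j
    · subst hkj
      have hik : i ≠ k := fun h => hki (congrArg Subtype.val h.symm)
      simp [hk, ← hpk, hnj, hik]
    · have hkpi : k.1 ≠ p i := fun h => parent_parent_ne hp h.symm hpk
      simp [hk, Subtype.val_injective.ne hkj, hkpi]

end Tree

section Lattice

variable {e : V → V → ℕ} {s : V} {p : {i : V // i ≠ s} → V}

theorem sum_subtype_ne_eq_sum {M : Type*} [AddCommMonoid M] {g : V → M} (hg : g s = 0) :
    ∑ k : {k : V // k ≠ s}, g k = ∑ k, g k := by
  rw [← Finset.sum_subtype (Finset.univ.erase s) (by simp) g, Finset.sum_erase _ hg]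

theorem mem_descendants {i j : {i : V // i ≠ s}} :
    i ∈ descendants e s j ↔ succeq e s i j := by
  simp [descendants]

theorem sum_descendants_eq_sum_ite {M : Type*} [AddCommMonoid M] (hconn : (graph e).Connected)
    (j : {i : V // i ≠ s}) (g : V → M) :
    ∑ k ∈ descendants e s j, g k = ∑ k, if succeq e s k j then g k else 0 := by
  rw [descendants, Finset.sum_filter]
  exact sum_subtype_ne_eq_sum (g := fun k => if succeq e s k j then g k else 0)
    (if_neg (not_sink_succeq hconn j.2))

variable (e s) in
noncomputable def descSum : Module.End ℤ ({i : V // i ≠ s} → ℤ) where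
  toFun u j := ∑ i ∈ descendants e s j, u i
  map_add' u v := by ext j; simp [Finset.sum_add_distrib]
  map_smul' c u := by ext j; simp [Finset.mul_sum]

theorem descSum_apply (u : {i : V // i ≠ s} → ℤ) (j : {i : V // i ≠ s}) :
    descSum e s u j = ∑ i ∈ descendants e s j, u i := rfl

theorem deltaRow_eq (i k : {i : V // i ≠ s}) :
    deltaRow e s i k = (if i = k then (deg e i : ℤ) else 0) - e i k := by
  unfold deltaRow
  split_ifs with h
  · subst h; rfl
  · simp

theorem descSum_deltaRow_eq_sum (hconn : (graph e).Connected) (i j : {i : V // i ≠ s}) :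
    descSum e s (deltaRow e s i) j = ∑ k, (e i k : ℤ) *
      ((if succeq e s i j then 1 else 0) - (if succeq e s k j then 1 else 0)) := by
  simp only [descSum_apply, deltaRow_eq, Finset.sum_sub_distrib, Finset.sum_ite_eq,
    mem_descendants]
  rw [sum_descendants_eq_sum_ite hconn j (fun k => (e i k : ℤ))]
  simp [mul_sub, deg, Finset.sum_sub_distrib, Finset.sum_ite_irrel]

theorem descSum_deltaRow (hsym : ∀ i j, e i j = e j i) (ht : (graph e).IsTree)
    (hp : IsParent e s p) (i j : {i : V // i ≠ s}) :
    descSum e s (deltaRow e s i) j =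
      e j (p j) * ((if i = j then 1 else 0) - (if i.1 = p j then 1 else 0)) := by
  rw [descSum_deltaRow_eq_sum ht.connected,
    Finset.sum_congr rfl fun k _ => edge_mul_indicator_sub ht hp i j k]
  simp only [Finset.sum_sub_distrib, ite_and, Finset.sum_ite_eq', Finset.mem_univ, if_true]
  rw [mul_sub]
  congr 1
  · split_ifs with h <;> simp [h]
  · split_ifs with h <;> simp [h, hsym j.1]

variable (e s p) in
theorem phiZ_add (u v : {i : V // i ≠ s} → ℤ) :
    phiZ e s p (u + v) = phiZ e s p u + phiZ e s p v := by
  ext j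
  simp [phiZ, Finset.sum_add_distrib]

variable (e s p) in
noncomputable def phiHom :
    ({i : V // i ≠ s} → ℤ) →+ ∀ j : {i : V // i ≠ s}, ZMod (e j (p j)) :=
  AddMonoidHom.mk' (phiZ e s p) (phiZ_add e s p)

theorem phiZ_eq_descSum (u : {i : V // i ≠ s} → ℤ) (j : {i : V // i ≠ s}) :
    phiZ e s p u j = ((descSum e s u j : ℤ) : ZMod (e j (p j))) := by
  simp [phiZ, descSum_apply]

theorem phiZ_deltaRow (hsym : ∀ i j, e i j = e j i) (ht : (graph e).IsTree)
    (hp : IsParent e s p) (i : {i : V // i ≠ s}) : phiZ e s p (deltaRow e s i) = 0 := by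
  ext j
  simp [phiZ_eq_descSum, descSum_deltaRow hsym ht hp]

theorem lattice_le_ker_phiHom (hsym : ∀ i j, e i j = e j i) (ht : (graph e).IsTree)
    (hp : IsParent e s p) : lattice e s ≤ (phiHom e s p).ker := by
  rw [lattice, AddSubgroup.closure_le]
  rintro _ ⟨i, rfl⟩
  exact phiZ_deltaRow hsym ht hp i

variable (p) in
noncomputable def children (j : {i : V // i ≠ s}) : Finset {i : V // i ≠ s} :=
  Finset.univ.filter fun i => p i = j

theorem sum_descendants_sum_children {M : Type*} [AddCommMonoid M] (ht : (graph e).IsTree)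
    (hp : IsParent e s p) (j : {i : V // i ≠ s}) (t : {i : V // i ≠ s} → M) :
    ∑ k ∈ descendants e s j, ∑ i ∈ children p k, t i =
      ∑ i ∈ (descendants e s j).erase j, t i := by
  rw [← Finset.sum_fiberwise_of_maps_to (s := (descendants e s j).erase j) (g := p)
    (t := (descendants e s j).map (Function.Embedding.subtype _)), Finset.sum_map]
  · refine Finset.sum_congr rfl fun k hk => Finset.sum_congr ?_ fun _ _ => rfl
    ext i
    rw [mem_descendants] at hk
    rw [children, Finset.mem_filter, Finset.mem_filter, Finset.mem_erase, mem_descendants]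
    refine ⟨fun ⟨_, hik⟩ => ⟨⟨?_, ?_⟩, hik⟩, fun h => ⟨Finset.mem_univ _, h.2⟩⟩
    · rintro rfl
      exact not_parent_succeq hp i (hik ▸ hk)
    · exact (succeq_iff_eq_or_parent_succeq ht hp i j).mpr (Or.inr (hik ▸ hk))
  · intro i hi
    rw [Finset.mem_erase, mem_descendants, succeq_iff_eq_or_parent_succeq ht hp] at hi
    have hpi := hi.2.resolve_left (Subtype.val_injective.ne hi.1)
    have hps : p i ≠ s := fun h => not_sink_succeq ht.connected j.2 (by rwa [h] at hpi)
    exact Finset.mem_map.mpr ⟨⟨p i, hps⟩, mem_descendants.mpr hpi, rfl⟩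

theorem descSum_surjective (ht : (graph e).IsTree) (hp : IsParent e s p) :
    Function.Surjective (descSum e s) := by
  intro t
  refine ⟨fun j => t j - ∑ i ∈ children p j, t i, ?_⟩
  ext j
  rw [descSum_apply, Finset.sum_sub_distrib, sum_descendants_sum_children ht hp,
    ← Finset.add_sum_erase _ _ (mem_descendants.mpr (succeq_refl _)), add_sub_cancel_right]

theorem descSum_injective (ht : (graph e).IsTree) (hp : IsParent e s p) :
    Function.Injective (descSum e s) :=
  OrzechProperty.injective_of_surjective_endomorphism _ (descSum_surjective ht hp)

variable (e s) in
noncomputable def ancestorSum (m : {i : V // i ≠ s} → ℤ) (v : V) : ℤ :=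
  ∑ k ∈ Finset.univ.filter fun k : {i : V // i ≠ s} => succeq e s v k, m k

theorem ancestorSum_sink (hconn : (graph e).Connected) (m : {i : V // i ≠ s} → ℤ) :
    ancestorSum e s m s = 0 :=
  Finset.sum_eq_zero fun k hk => absurd (Finset.mem_filter.mp hk).2 (not_sink_succeq hconn k.2)

theorem ancestorSum_sub_parent (ht : (graph e).IsTree) (hp : IsParent e s p)
    (m : {i : V // i ≠ s} → ℤ) (j : {i : V // i ≠ s}) :
    ancestorSum e s m j - ancestorSum e s m (p j) = m j := by
  have hins : Finset.univ.filter (fun k : {i : V // i ≠ s} => succeq e s j k) =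
      insert j (Finset.univ.filter fun k : {i : V // i ≠ s} => succeq e s (p j) k) := by
    ext k
    simp [succeq_iff_eq_or_parent_succeq ht hp j k, Subtype.ext_iff, eq_comm]
  rw [ancestorSum, hins, Finset.sum_insert (by simp [not_parent_succeq hp j]), ancestorSum,
    add_sub_cancel_right]

theorem descSum_sum_smul_deltaRow (hsym : ∀ i j, e i j = e j i) (ht : (graph e).IsTree)
    (hp : IsParent e s p) {c : V → ℤ} (hc : c s = 0) (j : {i : V // i ≠ s}) :
    descSum e s (∑ i : {i : V // i ≠ s}, c i • deltaRow e s i) j =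
      e j (p j) * (c j - c (p j)) := by
  simp only [map_sum, map_zsmul, Finset.sum_apply, Pi.smul_apply, smul_eq_mul,
    descSum_deltaRow hsym ht hp, mul_sub, mul_ite, mul_one, mul_zero, Finset.sum_sub_distrib,
    Finset.sum_ite_eq', Finset.mem_univ, if_true]
  rw [sum_subtype_ne_eq_sum (g := fun v => if v = p j then c v * e j (p j) else 0) (by simp [hc])]
  simp [mul_comm]

theorem ker_phiHom_le_lattice (hsym : ∀ i j, e i j = e j i) (ht : (graph e).IsTree)
    (hp : IsParent e s p) : (phiHom e s p).ker ≤ lattice e s := by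
  intro u hu
  have hdvd (j : {i : V // i ≠ s}) : (e j (p j) : ℤ) ∣ descSum e s u j :=
    (ZMod.intCast_zmod_eq_zero_iff_dvd _ _).mp ((phiZ_eq_descSum u j).symm.trans (congrFun hu j))
  choose m hm using hdvd
  have hu : u = ∑ i : {i : V // i ≠ s}, ancestorSum e s m i • deltaRow e s i := by
    refine descSum_injective ht hp (funext fun j => ?_)
    rw [descSum_sum_smul_deltaRow hsym ht hp (ancestorSum_sink ht.connected m),
      ancestorSum_sub_parent ht hp, hm]
  rw [hu]
  exact AddSubgroup.sum_mem _ fun i _ =>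
    AddSubgroup.zsmul_mem _ (AddSubgroup.subset_closure (Set.mem_range_self i)) _

theorem phiZ_surjective (ht : (graph e).IsTree) (hp : IsParent e s p) :
    Function.Surjective (phiZ e s p) := by
  intro t
  obtain ⟨u, hu⟩ := descSum_surjective ht hp fun j => ((t j).cast : ℤ)
  refine ⟨u, funext fun j => ?_⟩
  rw [phiZ_eq_descSum, hu]
  exact ZMod.intCast_zmod_cast (t j)

end Lattice

section Toppling

variable {e : V → V → ℕ} {s : V} {p : {i : V // i ≠ s} → V}

theorem phi_eq_phiZ (c : Conf s) : phi e s p c = phiZ e s p fun i => (c i : ℤ) := by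
  ext j
  simp [phi, phiZ]

theorem phi_add (u v : Conf s) : phi e s p (u + v) = phi e s p u + phi e s p v := by
  simp only [phi_eq_phiZ, Pi.add_apply, Nat.cast_add, ← phiZ_add]
  rfl

theorem natCast_toppleAt (i : {i : V // i ≠ s}) (u : Conf s) (hi : deg e i ≤ u i) :
    (fun k => (toppleAt e s i u k : ℤ)) = (fun k => (u k : ℤ)) - deltaRow e s i := by
  ext k
  simp only [toppleAt, deltaRow, Pi.sub_apply]
  split_ifs with hki hik hik
  · subst hki
    push_cast [hi]
    ring
  · exact absurd hki.symm hik
  · exact absurd hik.symm hki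
  · push_cast
    ring

theorem phi_toppleAt (hsym : ∀ i j, e i j = e j i) (ht : (graph e).IsTree) (hp : IsParent e s p)
    (i : {i : V // i ≠ s}) (u : Conf s) (hi : deg e i ≤ u i) :
    phi e s p (toppleAt e s i u) = phi e s p u := by
  have h := map_sub (phiHom e s p) (fun k => (u k : ℤ)) (deltaRow e s i)
  simp only [phiHom, AddMonoidHom.mk'_apply, phiZ_deltaRow hsym ht hp i, sub_zero] at h
  rw [phi_eq_phiZ, phi_eq_phiZ, natCast_toppleAt i u hi, h]

theorem phi_eq_of_reflTransGen_topple (hsym : ∀ i j, e i j = e j i) (ht : (graph e).IsTree)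
    (hp : IsParent e s p) {u v : Conf s} (h : Relation.ReflTransGen (Topple e s) u v) :
    phi e s p v = phi e s p u := by
  induction h with
  | refl => rfl
  | tail _ huv ih =>
    obtain ⟨i, hi, rfl⟩ := huv
    rw [phi_toppleAt hsym ht hp i _ hi, ih]

end Toppling

theorem stmt_12 (e : V → V → ℕ) (s : V) (hsym : ∀ i j : V, e i j = e j i)
    (htree : (graph e).IsTree)
    (p : {i : V // i ≠ s} → V) (hp : IsParent e s p)
    (σ : Conf s → Conf s) (hσ : IsStabilization e s σ)
    (eT : Conf s)
    (heT : Recurrent e s σ eT ∧ ∀ u, Recurrent e s σ u → σ (eT + u) = u) :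
    (∀ u v : {i : V // i ≠ s} → ℤ, phiZ e s p (u + v) = phiZ e s p u + phiZ e s p v) ∧
    Function.Surjective (phiZ e s p) ∧
    (∀ u : {i : V // i ≠ s} → ℤ, phiZ e s p u = 0 ↔ u ∈ lattice e s) ∧
    (∃ ι : (({i : V // i ≠ s} → ℤ) ⧸ lattice e s) ≃+
        (∀ j : {i : V // i ≠ s}, ZMod (e j.1 (p j))),
      ∀ u : {i : V // i ≠ s} → ℤ, ι (QuotientAddGroup.mk u) = phiZ e s p u) ∧
    (∀ c : Conf s, phiZ e s p (fun i => (c i : ℤ)) = phi e s p (σ (c + eT))) := by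
  have hker : lattice e s = (phiHom e s p).ker :=
    le_antisymm (lattice_le_ker_phiHom hsym htree hp) (ker_phiHom_le_lattice hsym htree hp)
  have hsurj : Function.Surjective (phiHom e s p) := phiZ_surjective htree hp
  have hphi_eT : phi e s p eT = 0 := by
    have h := phi_eq_of_reflTransGen_topple hsym htree hp (hσ (eT + eT)).2
    rw [heT.2 eT heT.1, phi_add] at h
    exact left_eq_add.mp h
  refine ⟨phiZ_add e s p, hsurj, fun u => by rw [hker]; rfl,
    ⟨(QuotientAddGroup.quotientAddEquivOfEq hker).trans
      (QuotientAddGroup.quotientKerEquivOfSurjective _ hsurj), fun u => rfl⟩, fun c => ?_⟩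
  rw [phi_eq_of_reflTransGen_topple hsym htree hp (hσ (c + eT)).2, phi_add, hphi_eT, add_zero,
    phi_eq_phiZ]

end SandpilePaper
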